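/- Let r > 0, p ≥ 1, 0 < ε < r, let B = p(r−ε)^{p−1}/(2ε) + 3((r−ε)^p − r^p)/(4ε²), and let μ > 0 satisfy μ|B| < 1. Let S_p^μ(ξ) denote the unique minimizer over ℝ of t ↦ (t−ξ)² + μ W_r^{p,ε}(t). Then S_p^μ is Lipschitz continuous with Lipschitz constant at most 1/(1 − μ|B|): |S_p^μ(ξ₁) − S_p^μ(ξ₂)| ≤ |ξ₁ − ξ₂|/(1 − μ|B|) for all ξ₁, ξ₂ ∈ ℝ. -/

import Mathlib

/-!
Write `B` for the constant of the statement and `A₀` for the cubic coefficient. On `[0, ∞)` the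
profile of `W` is `C¹`, and its derivative plus `2|B|u` is nondecreasing: on the power piece
this is clear, and on the cubic piece the second derivative `6A₀(u - (r + ε)) + 2B` is at least
`2B` because `A₀ ≤ 0`, which is the tangent inequality for `t ↦ t ^ p` at `r - ε`. Hence
`W t + |B| t²` is convex, so `t ↦ (t - ξ)² + μ W t` is `2(1 - μ|B|)`-strongly convex and grows
at least like `(1 - μ|B|)(t - S ξ)²` away from its minimizer. Adding these growth inequalities
for `ξ₁` and `ξ₂` gives `(1 - μ|B|) |S ξ₁ - S ξ₂|² ≤ (S ξ₁ - S ξ₂)(ξ₁ - ξ₂)`.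
-/

/-- The smoothed truncated power potential `W_r^{p,ε}`. -/
noncomputable def Wpot (r p ε t : ℝ) : ℝ :=
  if |t| ≤ r - ε then |t| ^ p
  else if |t| ≤ r + ε then
    (p * (r - ε) ^ (p - 1) / (12 * ε ^ 2) +
        (p * (r - ε) ^ (p - 1) / (2 * ε) +
          3 * ((r - ε) ^ p - r ^ p) / (4 * ε ^ 2)) / (3 * ε)) *
      (|t| - (r + ε)) ^ 3 +
    (p * (r - ε) ^ (p - 1) / (2 * ε) + 3 * ((r - ε) ^ p - r ^ p) / (4 * ε ^ 2)) *
      (|t| - (r + ε)) ^ 2 + r ^ p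
  else r ^ p

open Set Filter Topology

theorem hasDerivAt_ite_le {g h g' h' : ℝ → ℝ} {a : ℝ}
    (hg : ∀ x, HasDerivAt g (g' x) x) (hh : ∀ x, HasDerivAt h (h' x) x)
    (hval : g a = h a) (hder : g' a = h' a) (x : ℝ) :
    HasDerivAt (fun u => if u ≤ a then g u else h u) (if x ≤ a then g' x else h' x) x := by
  rcases lt_trichotomy x a with hxa | rfl | hax
  · rw [if_pos hxa.le]
    exact (hg x).congr_of_eventuallyEq
      (eventually_of_mem (Iio_mem_nhds hxa) fun u hu => if_pos (le_of_lt hu))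
  · rw [if_pos le_rfl]
    have hleft : HasDerivWithinAt (fun u => if u ≤ x then g u else h u) (g' x) (Iic x) x :=
      (hg x).hasDerivWithinAt.congr (fun u hu => if_pos hu) (if_pos le_rfl)
    have hright : HasDerivWithinAt (fun u => if u ≤ x then g u else h u) (g' x) (Ici x) x := by
      refine hder ▸ (hh x).hasDerivWithinAt.congr (fun u hu => ?_) (by simp [hval])
      rcases (mem_Ici.1 hu).eq_or_lt with rfl | hlt
      · simp [hval]
      · simp [not_le.2 hlt]
    simpa [Iic_union_Ici] using hleft.union hright
  · rw [if_neg (not_le.2 hax)]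
    exact (hh x).congr_of_eventuallyEq
      (eventually_of_mem (Ioi_mem_nhds hax) fun u hu => if_neg (not_le.2 hu))

theorem monotoneOn_ite_le {α β : Type*} [LinearOrder α] [Preorder β] {g h : α → β}
    {s : Set α} {a : α} (hs : s.OrdConnected) (hg : MonotoneOn g (s ∩ Iic a))
    (hh : MonotoneOn h (s ∩ Ici a)) (hgh : g a ≤ h a) :
    MonotoneOn (fun x => if x ≤ a then g x else h x) s := by
  intro x hx y hy hxy
  dsimp only
  split_ifs with hxa hya hya
  · exact hg ⟨hx, hxa⟩ ⟨hy, hya⟩ hxy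
  · have hay : a ≤ y := (not_le.1 hya).le
    have has : a ∈ s := hs.out hx hy ⟨hxa, hay⟩
    exact (hg ⟨hx, hxa⟩ ⟨has, le_rfl⟩ hxa).trans (hgh.trans (hh ⟨has, le_rfl⟩ ⟨hy, hay⟩ hay))
  · exact absurd (hxy.trans hya) hxa
  · exact hh ⟨hx, (not_le.1 hxa).le⟩ ⟨hy, (not_le.1 hya).le⟩ hxy

theorem UniformConvexOn.add_le_of_isMinOn {E : Type*} [NormedAddCommGroup E] [NormedSpace ℝ E]
    {s : Set E} {φ : ℝ → ℝ} {f : E → ℝ} {x y : E} (hf : UniformConvexOn s φ f)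
    (hmin : IsMinOn f s x) (hx : x ∈ s) (hy : y ∈ s) : f x + φ ‖x - y‖ ≤ f y := by
  have growth : ∀ l ∈ Ioo (0 : ℝ) 1, (1 - l) * φ ‖x - y‖ ≤ f y - f x := by
    intro l ⟨hl0, hl1⟩
    have hconv := hf.2 hx hy (sub_nonneg.2 hl1.le) hl0.le (sub_add_cancel 1 l)
    have hle : f x ≤ f ((1 - l) • x + l • y) :=
      hmin (hf.1 hx hy (sub_nonneg.2 hl1.le) hl0.le (sub_add_cancel 1 l))
    simp only [smul_eq_mul] at hconv
    have : l * ((1 - l) * φ ‖x - y‖) ≤ l * (f y - f x) := by nlinarith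
    exact le_of_mul_le_mul_left this hl0
  have hlim : Tendsto (fun l : ℝ => (1 - l) * φ ‖x - y‖) (𝓝[>] 0) (𝓝 (φ ‖x - y‖)) := by
    have : Tendsto (fun l : ℝ => (1 - l) * φ ‖x - y‖) (𝓝 0) (𝓝 ((1 - 0) * φ ‖x - y‖)) :=
      ((continuous_const.sub continuous_id).mul continuous_const).tendsto 0
    simpa using this.mono_left nhdsWithin_le_nhds
  have := le_of_tendsto hlim (eventually_of_mem (Ioo_mem_nhdsGT one_pos) growth)
  linarith

theorem norm_argmin_sub_argmin_le {E : Type*} [NormedAddCommGroup E]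
    [InnerProductSpace ℝ E] {g : E → ℝ} {κ : ℝ} (hκ : κ < 1)
    (hg : ConvexOn ℝ univ fun t => g t + κ * ‖t‖ ^ 2) {S : E → E}
    (hS : ∀ ξ t, ‖S ξ - ξ‖ ^ 2 + g (S ξ) ≤ ‖t - ξ‖ ^ 2 + g t) (ξ₁ ξ₂ : E) :
    ‖S ξ₁ - S ξ₂‖ ≤ ‖ξ₁ - ξ₂‖ / (1 - κ) := by
  have strong : ∀ ξ, StrongConvexOn univ (2 * (1 - κ)) fun t => ‖t - ξ‖ ^ 2 + g t := by
    intro ξ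
    rw [strongConvexOn_iff_convex]
    have affine : ConvexOn ℝ univ fun t : E => ‖ξ‖ ^ 2 - 2 * inner ℝ t ξ :=
      ⟨convex_univ, fun x _ y _ a b _ _ hab => le_of_eq <| by
        simp only [smul_eq_mul, inner_add_left, real_inner_smul_left]
        linear_combination (-‖ξ‖ ^ 2) * hab⟩
    have split : (fun t => ‖t - ξ‖ ^ 2 + g t - 2 * (1 - κ) / 2 * ‖t‖ ^ 2)
        = fun t => (g t + κ * ‖t‖ ^ 2) + (‖ξ‖ ^ 2 - 2 * inner ℝ t ξ) := by
      funext t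
      rw [norm_sub_sq_real]
      ring
    rw [split]
    exact hg.add affine
  have growth : ∀ ξ ξ', ‖S ξ - ξ‖ ^ 2 + g (S ξ) + (1 - κ) * ‖S ξ - S ξ'‖ ^ 2
      ≤ ‖S ξ' - ξ‖ ^ 2 + g (S ξ') := by
    intro ξ ξ'
    have := (strong ξ).add_le_of_isMinOn (x := S ξ) (y := S ξ')
      (fun t _ => hS ξ t) (mem_univ _) (mem_univ _)
    simpa [mul_div_cancel_left₀ (1 - κ) two_ne_zero] using this
  have key : (1 - κ) * ‖S ξ₁ - S ξ₂‖ ^ 2 ≤ ‖S ξ₁ - S ξ₂‖ * ‖ξ₁ - ξ₂‖ := by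
    have polar : ‖S ξ₂ - ξ₁‖ ^ 2 + ‖S ξ₁ - ξ₂‖ ^ 2 - ‖S ξ₁ - ξ₁‖ ^ 2 - ‖S ξ₂ - ξ₂‖ ^ 2
        = 2 * inner ℝ (S ξ₁ - S ξ₂) (ξ₁ - ξ₂) := by
      simp only [norm_sub_sq_real, inner_sub_left, inner_sub_right, real_inner_comm]
      ring
    have := real_inner_le_norm (S ξ₁ - S ξ₂) (ξ₁ - ξ₂)
    have h₁ := growth ξ₁ ξ₂
    have h₂ := growth ξ₂ ξ₁
    rw [norm_sub_rev (S ξ₂) (S ξ₁)] at h₂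
    linarith
  rw [le_div_iff₀ (sub_pos.2 hκ)]
  rcases (norm_nonneg (S ξ₁ - S ξ₂)).eq_or_lt with h | h
  · rw [← h, zero_mul]
    exact norm_nonneg _
  · nlinarith

namespace Wpot

variable {r p ε : ℝ}

noncomputable def coeffB (r p ε : ℝ) : ℝ :=
  p * (r - ε) ^ (p - 1) / (2 * ε) + 3 * ((r - ε) ^ p - r ^ p) / (4 * ε ^ 2)

noncomputable def coeffA (r p ε : ℝ) : ℝ :=
  p * (r - ε) ^ (p - 1) / (12 * ε ^ 2) + coeffB r p ε / (3 * ε)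

noncomputable def cubic (r p ε u : ℝ) : ℝ :=
  coeffA r p ε * (u - (r + ε)) ^ 3 + coeffB r p ε * (u - (r + ε)) ^ 2 + r ^ p

noncomputable def cubicDeriv (r p ε u : ℝ) : ℝ :=
  3 * coeffA r p ε * (u - (r + ε)) ^ 2 + 2 * coeffB r p ε * (u - (r + ε))

noncomputable def profile (r p ε u : ℝ) : ℝ :=
  if u ≤ r - ε then u ^ p else if u ≤ r + ε then cubic r p ε u else r ^ p

noncomputable def profileDeriv (r p ε u : ℝ) : ℝ :=
  if u ≤ r - ε then p * u ^ (p - 1) else if u ≤ r + ε then cubicDeriv r p ε u else 0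

theorem eq_profile_abs (t : ℝ) : Wpot r p ε t = profile r p ε |t| := rfl

theorem hasDerivAt_cubic (u : ℝ) : HasDerivAt (cubic r p ε) (cubicDeriv r p ε u) u := by
  have hlin : HasDerivAt (fun x : ℝ => x - (r + ε)) 1 u := (hasDerivAt_id u).sub_const (r + ε)
  refine ((((hlin.pow 3).const_mul (coeffA r p ε)).add
    ((hlin.pow 2).const_mul (coeffB r p ε))).add_const (r ^ p)).congr_deriv ?_
  simp only [cubicDeriv]
  ring

theorem cubic_left (hε : ε ≠ 0) : cubic r p ε (r - ε) = (r - ε) ^ p := by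
  unfold cubic coeffA coeffB
  field_simp
  ring

theorem cubicDeriv_left (hε : ε ≠ 0) : cubicDeriv r p ε (r - ε) = p * (r - ε) ^ (p - 1) := by
  unfold cubicDeriv coeffA coeffB
  field_simp
  ring

theorem coeffA_nonpos (hp : 1 ≤ p) (hε : 0 < ε) (hεr : ε < r) : coeffA r p ε ≤ 0 := by
  have tangent : p * (r - ε) ^ (p - 1) ≤ (r ^ p - (r - ε) ^ p) / ε := by
    have := (convexOn_rpow hp).le_slope_of_hasDerivAt (x := r - ε) (y := r)
      (by simp only [mem_Ici]; linarith) (by simp only [mem_Ici]; linarith) (by linarith)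
      (Real.hasDerivAt_rpow_const (Or.inr hp))
    rwa [slope_def_field, sub_sub_cancel] at this
  have hA : coeffA r p ε
      = (p * (r - ε) ^ (p - 1) - (r ^ p - (r - ε) ^ p) / ε) / (4 * ε ^ 2) := by
    unfold coeffA coeffB
    field_simp
    ring
  rw [hA]
  exact div_nonpos_of_nonpos_of_nonneg (by linarith) (by positivity)

theorem hasDerivAt_profile (hp : 1 ≤ p) (hε : 0 < ε) (u : ℝ) :
    HasDerivAt (profile r p ε) (profileDeriv r p ε u) u := by
  have hknots : r - ε ≤ r + ε := by linarith
  refine hasDerivAt_ite_le (g := fun x => x ^ p)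
    (h := fun x => if x ≤ r + ε then cubic r p ε x else r ^ p)
    (fun x => Real.hasDerivAt_rpow_const (Or.inr hp))
    (fun x => hasDerivAt_ite_le hasDerivAt_cubic (fun x => hasDerivAt_const x _)
      (by simp [cubic]) (by simp [cubicDeriv]) x) ?_ ?_ u
  · simp only [if_pos hknots, cubic_left hε.ne']
  · simp only [if_pos hknots, cubicDeriv_left hε.ne']

theorem monotoneOn_cubicDeriv_add (hp : 1 ≤ p) (hε : 0 < ε) (hεr : ε < r) :
    MonotoneOn (fun u => cubicDeriv r p ε u + 2 * |coeffB r p ε| * u) (Iic (r + ε)) := by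
  intro x _ y (hy : y ≤ r + ε) hxy
  have hA := coeffA_nonpos hp hε hεr
  have hB : 0 ≤ coeffB r p ε + |coeffB r p ε| := by linarith [neg_abs_le (coeffB r p ε)]
  have quad : 0 ≤ -coeffA r p ε * ((y - x) * (2 * (r + ε) - x - y)) :=
    mul_nonneg (by linarith) (mul_nonneg (by linarith) (by linarith))
  have lin : 0 ≤ (y - x) * (coeffB r p ε + |coeffB r p ε|) := mul_nonneg (by linarith) hB
  simp only [cubicDeriv]
  nlinarith

theorem monotoneOn_profileDeriv_add (hp : 1 ≤ p) (hε : 0 < ε) (hεr : ε < r) :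
    MonotoneOn (fun u => profileDeriv r p ε u + 2 * |coeffB r p ε| * u) (Ici 0) := by
  have hknots : r - ε ≤ r + ε := by linarith
  have linear : Monotone fun u : ℝ => 2 * |coeffB r p ε| * u :=
    fun x y hxy => by have := abs_nonneg (coeffB r p ε); nlinarith
  simp only [profileDeriv, ite_add]
  refine monotoneOn_ite_le ordConnected_Ici ?_ ?_ ?_
  · refine (MonotoneOn.add ?_ (linear.monotoneOn _)).mono inter_subset_left
    exact fun x hx y hy hxy => mul_le_mul_of_nonneg_left
      (Real.monotoneOn_rpow_Ici_of_exponent_nonneg (by linarith) hx hy hxy) (by linarith)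
  · refine monotoneOn_ite_le (ordConnected_Ici.inter ordConnected_Ici)
      ((monotoneOn_cubicDeriv_add hp hε hεr).mono inter_subset_right)
      (by simpa using linear.monotoneOn _) ?_
    simp [cubicDeriv]
  · simp only [if_pos hknots, cubicDeriv_left hε.ne', le_refl]

theorem convexOn_add_sq (hp : 1 ≤ p) (hε : 0 < ε) (hεr : ε < r) :
    ConvexOn ℝ univ fun t => Wpot r p ε t + |coeffB r p ε| * t ^ 2 := by
  set ψ : ℝ → ℝ := fun u => profile r p ε u + |coeffB r p ε| * u ^ 2
  have hψ : ∀ u, HasDerivAt ψ (profileDeriv r p ε u + 2 * |coeffB r p ε| * u) u := fun u =>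
    ((hasDerivAt_profile hp hε u).add ((hasDerivAt_pow 2 u).const_mul _)).congr_deriv
      (by push_cast; ring)
  have hderiv : deriv ψ = fun u => profileDeriv r p ε u + 2 * |coeffB r p ε| * u :=
    funext fun u => (hψ u).deriv
  have hmono' := monotoneOn_profileDeriv_add hp hε hεr
  have hcont : ContinuousOn ψ (Ici 0) := fun u _ => (hψ u).continuousAt.continuousWithinAt
  have hdiff : DifferentiableOn ℝ ψ (interior (Ici 0)) := fun u _ =>
    (hψ u).differentiableAt.differentiableWithinAt
  have hconv : ConvexOn ℝ (Ici 0) ψ := by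
    refine MonotoneOn.convexOn_of_deriv (convex_Ici 0) hcont hdiff ?_
    rw [hderiv, interior_Ici]
    exact hmono'.mono Ioi_subset_Ici_self
  have hmono : MonotoneOn ψ (Ici 0) := by
    refine monotoneOn_of_deriv_nonneg (convex_Ici 0) hcont hdiff fun u hu => ?_
    rw [interior_Ici] at hu
    have h0 : 0 ≤ profileDeriv r p ε 0 := by
      rw [profileDeriv, if_pos (by linarith)]
      exact mul_nonneg (by linarith) (Real.rpow_nonneg le_rfl _)
    have h0u := hmono' self_mem_Ici (mem_Ici.2 hu.le) hu.le
    simp only [mul_zero, add_zero] at h0u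
    rw [hderiv]
    exact h0.trans h0u
  rw [← range_norm ℝ, ← image_univ] at hconv hmono
  convert hconv.comp convexOn_univ_norm hmono using 1
  funext t
  simp [ψ, eq_profile_abs]

end Wpot

theorem statement16_general (r p ε μ : ℝ) (hp : 1 ≤ p) (hε0 : 0 < ε) (hεr : ε < r)
    (hμ : 0 < μ)
    (hμB : μ * |p * (r - ε) ^ (p - 1) / (2 * ε) +
        3 * ((r - ε) ^ p - r ^ p) / (4 * ε ^ 2)| < 1)
    (S : ℝ → ℝ)
    (hS : ∀ ξ s : ℝ, (S ξ - ξ) ^ 2 + μ * Wpot r p ε (S ξ) ≤ (s - ξ) ^ 2 + μ * Wpot r p ε s) :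
    ∀ ξ₁ ξ₂ : ℝ, |S ξ₁ - S ξ₂| ≤ |ξ₁ - ξ₂| /
      (1 - μ * |p * (r - ε) ^ (p - 1) / (2 * ε) +
        3 * ((r - ε) ^ p - r ^ p) / (4 * ε ^ 2)|) := by
  have hconv : ConvexOn ℝ univ fun t =>
      μ * Wpot r p ε t + μ * |Wpot.coeffB r p ε| * ‖t‖ ^ 2 := by
    simpa only [Real.norm_eq_abs, sq_abs, smul_eq_mul, mul_add, mul_assoc]
      using (Wpot.convexOn_add_sq hp hε0 hεr).smul hμ.le
  simpa only [Real.norm_eq_abs, sq_abs] using norm_argmin_sub_argmin_le hμB hconv (S := S)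
    (by simpa only [Real.norm_eq_abs, sq_abs] using hS)

/-- The thresholding function `S_p^μ` (the minimizer of
`t ↦ (t−ξ)² + μ W_r^{p,ε}(t)`, for `μ|B| < 1`) is Lipschitz with constant
at most `1/(1 − μ|B|)`. -/
theorem statement16 (r p ε μ : ℝ) (hr : 0 < r) (hp : 1 ≤ p) (hε0 : 0 < ε) (hεr : ε < r)
    (hμ : 0 < μ)
    (hμB : μ * |p * (r - ε) ^ (p - 1) / (2 * ε) +
        3 * ((r - ε) ^ p - r ^ p) / (4 * ε ^ 2)| < 1)
    (S : ℝ → ℝ)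
    (hS : ∀ ξ s : ℝ, (S ξ - ξ) ^ 2 + μ * Wpot r p ε (S ξ) ≤ (s - ξ) ^ 2 + μ * Wpot r p ε s) :
    ∀ ξ₁ ξ₂ : ℝ, |S ξ₁ - S ξ₂| ≤ |ξ₁ - ξ₂| /
      (1 - μ * |p * (r - ε) ^ (p - 1) / (2 * ε) +
        3 * ((r - ε) ^ p - r ^ p) / (4 * ε ^ 2)|) :=
  statement16_general r p ε μ hp hε0 hεr hμ hμB S hS
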